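/- arXiv:0907.3391 — 4 statements merged into one kernel-verified Lean document; each statement's English description precedes it below -/
import Mathlib

section
/- Let (A,∘) and (B,∗) be alternative algebras over a field of characteristic ≠ 2, and let L_A,R_A: A → End(B) make B a bimodule of (A,∘) and L_B,R_B: B → End(A) make A a bimodule of (B,∗). Write Ass_A = L_A + R_A and Ass_B = L_B + R_B. Assume for all x,y ∈ A and a,b ∈ B: (i) L_B(Ass_A(x)a)y + (Ass_B(a)x)∘y = L_B(a)(x∘y) + R_B(R_A(y)a)x + x∘(L_B(a)y); (ii) R_B(a)(x∘y + y∘x) = R_B(L_A(y)a)x + x∘(R_B(a)y) + R_B(L_A(x)a)y + y∘(R_B(a)x); (iii) R_B(a)(x∘y) + L_B(L_A(x)a)y + (R_B(a)x)∘y = R_B(Ass_A(y)a)x + x∘(Ass_B(a)y); (iv) L_B(a)(x∘y + y∘x) = (L_B(a)x)∘y + L_B(R_A(x)a)y + (L_B(a)y)∘x + L_B(R_A(y)a)x; (v) L_A(Ass_B(a)x)b + (Ass_A(x)a)∗b = L_A(x)(a∗b) + R_A(R_B(b)x)a + a∗(L_A(x)b); (vi) R_A(x)(a∗b + b∗a)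 = R_A(L_B(b)x)a + a∗(R_A(x)b) + R_A(L_B(a)x)b + b∗(R_A(x)a); (vii) R_A(x)(a∗b) + L_A(L_B(a)x)b + (R_A(x)a)∗b = R_A(Ass_B(b)x)a + a∗(Ass_A(x)b); (viii) L_A(x)(a∗b + b∗a) = (L_A(x)a)∗b + L_A(R_B(a)x)b + (L_A(x)b)∗a + L_A(R_B(b)x)a. Then the product (x+a)⋆(y+b) = (x∘y + L_B(a)y + R_B(b)x) + (a∗b + L_A(x)b + R_A(y)a) makes the vector space A⊕B an alternative algebra. -/
open TensorProduct

universe u v w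

variable {k : Type u} [Field k]

section Defs

variable {M : Type v} {V : Type w} [AddCommGroup M] [Module k M] [AddCommGroup V] [Module k V]

/-- Alternative algebra: both alternative laws. -/
def IsAlt (m : M →ₗ[k] M →ₗ[k] M) : Prop :=
  (∀ x y : M, m (m x x) y = m x (m x y)) ∧ (∀ x y : M, m (m y x) x = m y (m x x))

/-- right associator -/
def rAssoc (p s : M →ₗ[k] M →ₗ[k] M) (x y z : M) : M :=
  p (p x y) z - p x (p y z + s y z)

/-- middle associator -/
def mAssoc (p s : M →ₗ[k] M →ₗ[k] M) (x y z : M) : M :=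
  p (s x y) z - s x (p y z)

/-- left associator -/
def lAssoc (p s : M →ₗ[k] M →ₗ[k] M) (x y z : M) : M :=
  s (p x y + s x y) z - s x (s y z)

/-- Pre-alternative algebra. -/
def IsPreAlt (p s : M →ₗ[k] M →ₗ[k] M) : Prop :=
  (∀ x y z : M, mAssoc p s x y z + rAssoc p s y x z = 0) ∧
  (∀ x y z : M, mAssoc p s x y z + lAssoc p s x z y = 0) ∧
  (∀ x y : M, rAssoc p s y x x = 0) ∧
  (∀ x y : M, lAssoc p s x x y = 0)

/-- Bimodule of an alternative algebra. -/
def IsAltBimod (m : M →ₗ[k] M →ₗ[k] M) (L R : M →ₗ[k] Module.End k V) : Prop :=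
  (∀ x : M, L (m x x) = L x * L x) ∧
  (∀ x : M, R (m x x) = R x * R x) ∧
  (∀ x y : M, R y * L x - L x * R y = R (m x y) - R y * R x) ∧
  (∀ x y : M, L (m y x) - L y * L x = L y * R x - R x * L y)

/-- Bimodule of a pre-alternative algebra. -/
def IsPreAltBimod (p s : M →ₗ[k] M →ₗ[k] M) (Lp Rp Ls Rs : M →ₗ[k] Module.End k V) : Prop :=
  (∀ x y : M, Ls ((p x y + s x y) + (p y x + s y x)) = Ls x * Ls y + Ls y * Ls x) ∧
  (∀ x y : M, Rs y * ((Lp x + Ls x) + (Rp x + Rs x)) = Ls x * Rs y + Rs (s x y)) ∧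
  (∀ x y : M, Rp y * Ls x + Rp y * Rp x = Ls x * Rp y + Rp (p x y + s x y)) ∧
  (∀ x y : M, Rp y * Rs x + Rp y * Lp x = Rs (p x y) + Lp x * (Rp y + Rs y)) ∧
  (∀ x y : M, Lp (s x y) + Lp (p y x) = Ls x * Lp y + Lp y * (Lp x + Ls x)) ∧
  (∀ x y : M, Ls (p y x + s y x) + Rp x * Ls y = Ls y * Ls x + Ls y * Rp x) ∧
  (∀ x y : M, Rs y * (Rp x + Rs x) + Rp x * Rs y = Rs (s x y) + Rs (p y x)) ∧
  (∀ x y : M, Rs x * (Lp y + Ls y) + Lp (s y x) = Ls y * Rs x + Ls y * Lp x) ∧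
  (∀ x y : M, Rp y * Rp x + Rp x * Rp y = Rp ((p x y + s x y) + (p y x + s y x))) ∧
  (∀ x y : M, Rp y * Lp x + Lp (p x y) = Lp x * ((Rp y + Rs y) + (Lp y + Ls y)))

/-- Dual family of endomorphisms: `(dualT L) x = (L x)^*`. -/
noncomputable def dualT (L : M →ₗ[k] Module.End k V) :
    M →ₗ[k] Module.End k (Module.Dual k V) :=
  (Module.Dual.transpose (R := k) (M := V) (M' := V)) ∘ₗ L

/-- The linear map `A* → A` associated to an element of `A ⊗ A`:
`⟨u* ⊗ v*, r⟩ = ⟨u*, T_r v*⟩`, i.e. `T_r(v*) = Σ v*(bᵢ) • aᵢ`. -/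
noncomputable def Tr : (M ⊗[k] M) →ₗ[k] Module.Dual k M →ₗ[k] M :=
  TensorProduct.lift (LinearMap.mk₂ k
    (fun a b => (Module.Dual.eval k M b).smulRight a)
    (fun a a' b => by ext f; simp)
    (fun c a b => by ext f; simp only [LinearMap.smulRight_apply, LinearMap.smul_apply,
      Module.Dual.eval_apply]; exact smul_comm _ _ _)
    (fun a b b' => by ext f; simp [add_smul])
    (fun c a b => by ext f; simp [map_smul, mul_smul]))

noncomputable def tlift (m : M →ₗ[k] M →ₗ[k] M) : M ⊗[k] M →ₗ[k] M := TensorProduct.lift m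

/-- `r₁₂ ⋄ r₁₃` : `(a⊗b)⊗(c⊗d) ↦ (a⋄c)⊗b⊗d`. -/
noncomputable def comp12_13 (m : M →ₗ[k] M →ₗ[k] M) :
    (M ⊗[k] M) ⊗[k] (M ⊗[k] M) →ₗ[k] M ⊗[k] (M ⊗[k] M) :=
  (TensorProduct.map (tlift m) LinearMap.id) ∘ₗ
    (TensorProduct.tensorTensorTensorComm k M M M M).toLinearMap

/-- `r₁₃ ⋄ r₁₂` : `(a⊗b)⊗(c⊗d) ↦ (a⋄c)⊗d⊗b`. -/
noncomputable def comp13_12 (m : M →ₗ[k] M →ₗ[k] M) :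
    (M ⊗[k] M) ⊗[k] (M ⊗[k] M) →ₗ[k] M ⊗[k] (M ⊗[k] M) :=
  (TensorProduct.map (tlift m) (TensorProduct.comm k M M).toLinearMap) ∘ₗ
    (TensorProduct.tensorTensorTensorComm k M M M M).toLinearMap

/-- `r₁₂ ⋄ r₂₃` : `(a⊗b)⊗(c⊗d) ↦ a⊗(b⋄c)⊗d`. -/
noncomputable def comp12_23 (m : M →ₗ[k] M →ₗ[k] M) :
    (M ⊗[k] M) ⊗[k] (M ⊗[k] M) →ₗ[k] M ⊗[k] (M ⊗[k] M) :=
  (TensorProduct.map LinearMap.id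
      ((TensorProduct.map (tlift m) LinearMap.id) ∘ₗ
        (TensorProduct.assoc k M M M).symm.toLinearMap)) ∘ₗ
    (TensorProduct.assoc k M M (M ⊗[k] M)).toLinearMap

/-- `r₂₃ ⋄ r₁₂` : `(a⊗b)⊗(c⊗d) ↦ c⊗(a⋄d)⊗b`. -/
noncomputable def comp23_12 (m : M →ₗ[k] M →ₗ[k] M) :
    (M ⊗[k] M) ⊗[k] (M ⊗[k] M) →ₗ[k] M ⊗[k] (M ⊗[k] M) :=
  (TensorProduct.map LinearMap.id
      ((TensorProduct.map (tlift m.flip) LinearMap.id) ∘ₗ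
        (TensorProduct.assoc k M M M).symm.toLinearMap)) ∘ₗ
    (TensorProduct.assoc k M M (M ⊗[k] M)).toLinearMap ∘ₗ
    (TensorProduct.comm k (M ⊗[k] M) (M ⊗[k] M)).toLinearMap

/-- `r₁₃ ⋄ r₂₃` : `(a⊗b)⊗(c⊗d) ↦ a⊗c⊗(b⋄d)`. -/
noncomputable def comp13_23 (m : M →ₗ[k] M →ₗ[k] M) :
    (M ⊗[k] M) ⊗[k] (M ⊗[k] M) →ₗ[k] M ⊗[k] (M ⊗[k] M) :=
  (TensorProduct.map LinearMap.id (TensorProduct.map LinearMap.id (tlift m))) ∘ₗ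
    (TensorProduct.assoc k M M (M ⊗[k] M)).toLinearMap ∘ₗ
    (TensorProduct.tensorTensorTensorComm k M M M M).toLinearMap

/-- `r₂₃ ⋄ r₁₃` : `(a⊗b)⊗(c⊗d) ↦ c⊗a⊗(b⋄d)`. -/
noncomputable def comp23_13 (m : M →ₗ[k] M →ₗ[k] M) :
    (M ⊗[k] M) ⊗[k] (M ⊗[k] M) →ₗ[k] M ⊗[k] (M ⊗[k] M) :=
  (TensorProduct.map LinearMap.id (TensorProduct.map LinearMap.id (tlift m))) ∘ₗ
    (TensorProduct.assoc k M M (M ⊗[k] M)).toLinearMap ∘ₗ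
    (TensorProduct.map (TensorProduct.comm k M M).toLinearMap LinearMap.id) ∘ₗ
    (TensorProduct.tensorTensorTensorComm k M M M M).toLinearMap

/-- The alternative Yang–Baxter expression `r₂₃∘r₁₂ − r₁₂∘r₁₃ − r₁₃∘r₂₃`. -/
noncomputable def ayb (m : M →ₗ[k] M →ₗ[k] M) (r : M ⊗[k] M) : M ⊗[k] (M ⊗[k] M) :=
  comp23_12 m (r ⊗ₜ r) - comp12_13 m (r ⊗ₜ r) - comp13_23 m (r ⊗ₜ r)

/-- PA-equations. -/
noncomputable def PA11 (p s : M →ₗ[k] M →ₗ[k] M) (r : M ⊗[k] M) : M ⊗[k] (M ⊗[k] M) :=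
  comp12_13 (p + s) (r ⊗ₜ r) - comp23_12 s (r ⊗ₜ r) - comp13_23 p (r ⊗ₜ r)

noncomputable def PA12 (p s : M →ₗ[k] M →ₗ[k] M) (r : M ⊗[k] M) : M ⊗[k] (M ⊗[k] M) :=
  comp13_12 (p + s) (r ⊗ₜ r) - comp12_23 p (r ⊗ₜ r) - comp23_13 s (r ⊗ₜ r)

noncomputable def PA21 (p s : M →ₗ[k] M →ₗ[k] M) (r : M ⊗[k] M) : M ⊗[k] (M ⊗[k] M) :=
  comp12_23 (p + s) (r ⊗ₜ r) - comp23_13 p (r ⊗ₜ r) - comp13_12 s (r ⊗ₜ r)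

noncomputable def PA22 (p s : M →ₗ[k] M →ₗ[k] M) (r : M ⊗[k] M) : M ⊗[k] (M ⊗[k] M) :=
  comp23_12 (p + s) (r ⊗ₜ r) - comp13_23 s (r ⊗ₜ r) - comp12_13 p (r ⊗ₜ r)

noncomputable def PA31 (p s : M →ₗ[k] M →ₗ[k] M) (r : M ⊗[k] M) : M ⊗[k] (M ⊗[k] M) :=
  comp13_23 (p + s) (r ⊗ₜ r) - comp12_13 s (r ⊗ₜ r) - comp23_12 p (r ⊗ₜ r)

noncomputable def PA32 (p s : M →ₗ[k] M →ₗ[k] M) (r : M ⊗[k] M) : M ⊗[k] (M ⊗[k] M) :=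
  comp23_13 (p + s) (r ⊗ₜ r) - comp13_12 p (r ⊗ₜ r) - comp12_23 s (r ⊗ₜ r)

/-- Semidirect sum product on `M × V` for an alternative algebra `M` and a bimodule `(V,L,R)`. -/
def sd (m : M →ₗ[k] M →ₗ[k] M) (L R : M →ₗ[k] Module.End k V) :
    (M × V) →ₗ[k] (M × V) →ₗ[k] (M × V) :=
  LinearMap.mk₂ k (fun x y => (m x.1 y.1, L x.1 y.2 + R y.1 x.2))
    (fun x x' y => by refine Prod.ext ?_ ?_ <;> simp [map_add] <;> abel)
    (fun c x y => by refine Prod.ext ?_ ?_ <;> simp [map_smul, smul_add])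
    (fun x y y' => by refine Prod.ext ?_ ?_ <;> simp [map_add] <;> abel)
    (fun c x y => by refine Prod.ext ?_ ?_ <;> simp [map_smul, smul_add])

end Defs

/-- The product on `A ⊕ B` attached to a matched pair of alternative algebras. -/
def mp {A : Type v} {B : Type w} [AddCommGroup A] [Module k A] [AddCommGroup B] [Module k B]
    (mA : A →ₗ[k] A →ₗ[k] A) (mB : B →ₗ[k] B →ₗ[k] B)
    (LA RA : A →ₗ[k] Module.End k B) (LB RB : B →ₗ[k] Module.End k A) :
    (A × B) →ₗ[k] (A × B) →ₗ[k] (A × B) :=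
  LinearMap.mk₂ k (fun x y =>
      (mA x.1 y.1 + LB x.2 y.1 + RB y.2 x.1, mB x.2 y.2 + LA x.1 y.2 + RA y.1 x.2))
    (fun x x' y => by refine Prod.ext ?_ ?_ <;> simp [map_add] <;> abel)
    (fun c x y => by refine Prod.ext ?_ ?_ <;> simp [map_smul, smul_add])
    (fun x y y' => by refine Prod.ext ?_ ?_ <;> simp [map_add] <;> abel)
    (fun c x y => by refine Prod.ext ?_ ?_ <;> simp [map_smul, smul_add])

theorem stmt13 {A : Type v} {B : Type w} [AddCommGroup A] [Module k A]
    [AddCommGroup B] [Module k B] (hchar : (2 : k) ≠ 0)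
    (mA : A →ₗ[k] A →ₗ[k] A) (mB : B →ₗ[k] B →ₗ[k] B)
    (haltA : IsAlt mA) (haltB : IsAlt mB)
    (LA RA : A →ₗ[k] Module.End k B) (LB RB : B →ₗ[k] Module.End k A)
    (hbimA : IsAltBimod mA LA RA) (hbimB : IsAltBimod mB LB RB)
    (h1 : ∀ (x y : A) (a : B), LB (LA x a + RA x a) y + mA (LB a x + RB a x) y =
      LB a (mA x y) + RB (RA y a) x + mA x (LB a y))
    (h2 : ∀ (x y : A) (a : B), RB a (mA x y + mA y x) =
      RB (LA y a) x + mA x (RB a y) + RB (LA x a) y + mA y (RB a x))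
    (h3 : ∀ (x y : A) (a : B), RB a (mA x y) + LB (LA x a) y + mA (RB a x) y =
      RB (LA y a + RA y a) x + mA x (LB a y + RB a y))
    (h4 : ∀ (x y : A) (a : B), LB a (mA x y + mA y x) =
      mA (LB a x) y + LB (RA x a) y + mA (LB a y) x + LB (RA y a) x)
    (h5 : ∀ (x : A) (a b : B), LA (LB a x + RB a x) b + mB (LA x a + RA x a) b =
      LA x (mB a b) + RA (RB b x) a + mB a (LA x b))
    (h6 : ∀ (x : A) (a b : B), RA x (mB a b + mB b a) =
      RA (LB b x) a + mB a (RA x b) + RA (LB a x) b + mB b (RA x a))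
    (h7 : ∀ (x : A) (a b : B), RA x (mB a b) + LA (LB a x) b + mB (RA x a) b =
      RA (LB b x + RB b x) a + mB a (LA x b + RA x b))
    (h8 : ∀ (x : A) (a b : B), LA x (mB a b + mB b a) =
      mB (LA x a) b + LA (RB a x) b + mB (LA x b) a + LA (RB b x) a) :
    IsAlt (mp mA mB LA RA LB RB) := by
  obtain ⟨altA1, altA2⟩ := haltA
  obtain ⟨altB1, altB2⟩ := haltB
  obtain ⟨bA1, bA2, bA3, bA4⟩ := hbimA
  obtain ⟨bB1, bB2, bB3, bB4⟩ := hbimB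
  have pA1 : ∀ (x : A) (v : B), LA (mA x x) v = LA x (LA x v) := fun x v => by
    simpa [Module.End.mul_apply] using DFunLike.congr_fun (bA1 x) v
  have pA2 : ∀ (x : A) (v : B), RA (mA x x) v = RA x (RA x v) := fun x v => by
    simpa [Module.End.mul_apply] using DFunLike.congr_fun (bA2 x) v
  have pA3 : ∀ (x y : A) (v : B),
      RA y (LA x v) - LA x (RA y v) = RA (mA x y) v - RA y (RA x v) := fun x y v => by
    simpa [Module.End.mul_apply, LinearMap.sub_apply] using DFunLike.congr_fun (bA3 x y) v
  have pA4 : ∀ (x y : A) (v : B),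
      LA (mA y x) v - LA y (LA x v) = LA y (RA x v) - RA x (LA y v) := fun x y v => by
    simpa [Module.End.mul_apply, LinearMap.sub_apply] using DFunLike.congr_fun (bA4 x y) v
  have pB1 : ∀ (a : B) (v : A), LB (mB a a) v = LB a (LB a v) := fun a v => by
    simpa [Module.End.mul_apply] using DFunLike.congr_fun (bB1 a) v
  have pB2 : ∀ (a : B) (v : A), RB (mB a a) v = RB a (RB a v) := fun a v => by
    simpa [Module.End.mul_apply] using DFunLike.congr_fun (bB2 a) v
  have pB3 : ∀ (a b : B) (v : A),
      RB b (LB a v) - LB a (RB b v) = RB (mB a b) v - RB b (RB a v) := fun a b v => by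
    simpa [Module.End.mul_apply, LinearMap.sub_apply] using DFunLike.congr_fun (bB3 a b) v
  have pB4 : ∀ (a b : B) (v : A),
      LB (mB b a) v - LB b (LB a v) = LB b (RB a v) - RB a (LB b v) := fun a b v => by
    simpa [Module.End.mul_apply, LinearMap.sub_apply] using DFunLike.congr_fun (bB4 a b) v
  have k2 : ∀ (x : A) (b : B), RB b (mA x x) = RB (LA x b) x + mA x (RB b x) := fun x b => by
    have h := h2 x x b
    rw [map_add] at h
    refine smul_right_injective A hchar ?_
    show (2:k) • _ = (2:k) • _
    rw [two_smul, two_smul]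
    linear_combination (norm := abel1) h
  have k4 : ∀ (y : A) (a : B), LB a (mA y y) = mA (LB a y) y + LB (RA y a) y := fun y a => by
    have h := h4 y y a
    rw [map_add] at h
    refine smul_right_injective A hchar ?_
    show (2:k) • _ = (2:k) • _
    rw [two_smul, two_smul]
    linear_combination (norm := abel1) h
  have k6 : ∀ (y : A) (a : B), RA y (mB a a) = RA (LB a y) a + mB a (RA y a) := fun y a => by
    have h := h6 y a a
    rw [map_add] at h
    refine smul_right_injective B hchar ?_
    show (2:k) • _ = (2:k) • _
    rw [two_smul, two_smul]
    linear_combination (norm := abel1) h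
  have k8 : ∀ (x : A) (b : B), LA x (mB b b) = mB (LA x b) b + LA (RB b x) b := fun x b => by
    have h := h8 x b b
    rw [map_add] at h
    refine smul_right_injective B hchar ?_
    show (2:k) • _ = (2:k) • _
    rw [two_smul, two_smul]
    linear_combination (norm := abel1) h
  constructor
  · rintro ⟨x, a⟩ ⟨y, b⟩
    refine Prod.ext ?_ ?_ <;>
      simp only [mp, LinearMap.mk₂_apply, map_add, LinearMap.add_apply]
    · have e1 := h1 x y a
      simp only [map_add, LinearMap.add_apply] at e1
      linear_combination (norm := abel1) altA1 x y + pB1 a y + pB3 a b x + k2 x b + e1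
    · have e5 := h5 x a b
      simp only [map_add, LinearMap.add_apply] at e5
      linear_combination (norm := abel1) altB1 a b + pA1 x b + pA3 x y a + k6 y a + e5
  · rintro ⟨x, a⟩ ⟨y, b⟩
    refine Prod.ext ?_ ?_ <;>
      simp only [mp, LinearMap.mk₂_apply, map_add, LinearMap.add_apply]
    · have e3 := h3 y x a
      simp only [map_add, LinearMap.add_apply] at e3
      linear_combination (norm := abel1) altA2 x y - pB2 a y + pB4 a b x - k4 x b + e3
    · have e7 := h7 x b a
      simp only [map_add, LinearMap.add_apply] at e7
      linear_combination (norm := abel1) altB2 a b - pA2 x b + pA4 x y a - k8 y a + e7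
end

section
/- Let (V, L≺, R≺, L≻, R≻) be a finite-dimensional bimodule of a pre-alternative algebra (A,≺,≻) over a field of characteristic ≠ 2, and set L∘ = L≺ + L≻, R∘ = R≺ + R≻. Then (V*, −R≻*, L∘*, R∘*, −L≺*) is a bimodule of (A,≺,≻), where ρ* denotes the dual map of ρ: A → End(V). -/
open TensorProduct

universe u v w

variable {k : Type u} [Field k]

set_option synthInstance.maxHeartbeats 1000000 in
theorem stmt14 {A : Type v} {V : Type w} [AddCommGroup A] [Module k A]
    [AddCommGroup V] [Module k V] [FiniteDimensional k V] (hchar : (2 : k) ≠ 0)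
    (p s : A →ₗ[k] A →ₗ[k] A) (h : IsPreAlt p s)
    (Lp Rp Ls Rs : A →ₗ[k] Module.End k V)
    (hbim : IsPreAltBimod p s Lp Rp Ls Rs) :
    IsPreAltBimod p s (dualT (-Rs)) (dualT (Lp + Ls)) (dualT (Rp + Rs)) (dualT (-Lp)) := by
  obtain ⟨h1, h2, h3, h4, h5, h6, h7, h8, h9, h10⟩ := hbim
  simp only [map_add] at h1 h3 h6 h9
  have tmul : ∀ f g : Module.End k V,
      Module.Dual.transpose (R := k) f * Module.Dual.transpose (R := k) g =
        Module.Dual.transpose (R := k) (g * f) := fun f g => by ext φ v; rfl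
  have tadd : ∀ f g : Module.End k V,
      Module.Dual.transpose (R := k) f + Module.Dual.transpose (R := k) g =
        Module.Dual.transpose (R := k) (f + g) := fun f g =>
    (map_add (Module.Dual.transpose (R := k)) f g).symm
  have tneg : ∀ f : Module.End k V,
      -Module.Dual.transpose (R := k) f = Module.Dual.transpose (R := k) (-f) := fun f =>
    (map_neg (Module.Dual.transpose (R := k)) f).symm
  refine ⟨?_, ?_, ?_, ?_, ?_, ?_, ?_, ?_, ?_, ?_⟩ <;> intro x y
  · simp only [dualT, LinearMap.comp_apply, LinearMap.add_apply, LinearMap.neg_apply,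
      map_add, map_neg]
    simp only [mul_add, add_mul, neg_mul, mul_neg, tmul, tneg, tadd]
    refine congrArg _ ?_
    linear_combination (norm := noncomm_ring) - h1 x y - h3 x y - h3 y x + h6 x y + h6 y x - h7 x y - h7 y x
  · simp only [dualT, LinearMap.comp_apply, LinearMap.add_apply, LinearMap.neg_apply,
      map_add, map_neg]
    simp only [mul_add, add_mul, neg_mul, mul_neg, tmul, tneg, tadd]
    refine congrArg _ ?_
    linear_combination (norm := noncomm_ring) - h2 x y - h4 y x + h7 x y + h8 y x
  · simp only [dualT, LinearMap.comp_apply, LinearMap.add_apply, LinearMap.neg_apply,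
      map_add, map_neg]
    simp only [mul_add, add_mul, neg_mul, mul_neg, tmul, tneg, tadd]
    refine congrArg _ ?_
    linear_combination (norm := noncomm_ring) - h1 x y + h2 x y + h4 y x - h5 y x + h6 x y - h7 x y + h8 x y - h8 y x
  · simp only [dualT, LinearMap.comp_apply, LinearMap.add_apply, LinearMap.neg_apply,
      map_add, map_neg]
    simp only [mul_add, add_mul, neg_mul, mul_neg, tmul, tneg, tadd]
    refine congrArg _ ?_
    linear_combination (norm := noncomm_ring) h5 y x - h8 x y
  · simp only [dualT, LinearMap.comp_apply, LinearMap.add_apply, LinearMap.neg_apply,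
      map_add, map_neg]
    simp only [mul_add, add_mul, neg_mul, mul_neg, tmul, tneg, tadd]
    refine congrArg _ ?_
    linear_combination (norm := noncomm_ring) h7 x y
  · simp only [dualT, LinearMap.comp_apply, LinearMap.add_apply, LinearMap.neg_apply,
      map_add, map_neg]
    simp only [mul_add, add_mul, neg_mul, mul_neg, tmul, tneg, tadd]
    refine congrArg _ ?_
    linear_combination (norm := noncomm_ring) - h1 x y + h2 x y - h3 y x + h4 x y + h6 x y + h6 y x - h7 x y - h7 y x
  · simp only [dualT, LinearMap.comp_apply, LinearMap.add_apply, LinearMap.neg_apply,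
      map_add, map_neg]
    simp only [mul_add, add_mul, neg_mul, mul_neg, tmul, tneg, tadd]
    refine congrArg _ ?_
    linear_combination (norm := noncomm_ring) h5 x y
  · simp only [dualT, LinearMap.comp_apply, LinearMap.add_apply, LinearMap.neg_apply,
      map_add, map_neg]
    simp only [mul_add, add_mul, neg_mul, mul_neg, tmul, tneg, tadd]
    refine congrArg _ ?_
    linear_combination (norm := noncomm_ring) - h4 x y + h7 y x
  · simp only [dualT, LinearMap.comp_apply, LinearMap.add_apply, LinearMap.neg_apply,
      map_add, map_neg]
    simp only [mul_add, add_mul, neg_mul, mul_neg, tmul, tneg, tadd]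
    refine congrArg _ ?_
    linear_combination (norm := noncomm_ring) - h1 x y - h5 x y - h5 y x
  · simp only [dualT, LinearMap.comp_apply, LinearMap.add_apply, LinearMap.neg_apply,
      map_add, map_neg]
    simp only [mul_add, add_mul, neg_mul, mul_neg, tmul, tneg, tadd]
    refine congrArg _ ?_
    linear_combination (norm := noncomm_ring) - h2 y x + h7 y x
end

section
/- Let (A,≺,≻) be a finite-dimensional pre-alternative algebra over a field of characteristic ≠ 2, with associated alternative product x∘y = x≺y + x≻y, and let r ∈ A⊗A be symmetric. Then for each i ∈ {1,2} and j ∈ {1,2,3}, r satisfies the PA_j^i-equation if and only if T_r(a*)∘T_r(b*) = T_r(r_≺*(T_r(a*))b* + l_≻*(T_r(b*))a*) for all a*,b* ∈ A*, i.e., T_r is an Al-operator of As(A) associated to the bimodule (A*, r_≺*, l_≻*); in particular, for symmetric r the six PA-equations are mutually equivalent. Moreover, if r is a solution, then a*≺'b* = l_≻*(T_r(b*))a* and a*≻'b* = r_≺*(T_r(a*))b* define a pre-alternative algebra structure on A*. -/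
open TensorProduct

universe u v w

variable {k : Type u} [Field k]

/-- `T_r` is an `Al`-operator of `As(A)` associated to the bimodule `(A*, r_≺*, l_≻*)`. -/
noncomputable def AlCondPre {A : Type v} [AddCommGroup A] [Module k A]
    (p s : A →ₗ[k] A →ₗ[k] A) (r : A ⊗[k] A) : Prop :=
  ∀ a b : Module.Dual k A,
    (p + s) (Tr r a) (Tr r b) = Tr r (dualT p.flip (Tr r a) b + dualT s (Tr r b) a)

section Aux
variable {A : Type v} [AddCommGroup A] [Module k A]

@[simp] lemma Tr_tmul (a b : A) (f : Module.Dual k A) : Tr (a ⊗ₜ[k] b) f = f b • a := by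
  simp [Tr]

@[simp] lemma dualT_apply (L : A →ₗ[k] Module.End k A) (x : A) (φ : Module.Dual k A) (y : A) :
    dualT L x φ y = φ (L x y) := by
  simp [dualT, Module.Dual.transpose_apply]

noncomputable def pr2 (β γ : Module.Dual k A) : A ⊗[k] A →ₗ[k] k :=
  TensorProduct.lift (((LinearMap.mul k k).comp β).compl₂ γ)

@[simp] lemma pr2_tmul (β γ : Module.Dual k A) (x y : A) :
    pr2 β γ (x ⊗ₜ[k] y) = β x * γ y := by simp [pr2]

noncomputable def pr3 (α β γ : Module.Dual k A) : A ⊗[k] (A ⊗[k] A) →ₗ[k] k :=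
  TensorProduct.lift (((LinearMap.mul k k).comp α).compl₂ (pr2 β γ))

@[simp] lemma pr3_tmul (α β γ : Module.Dual k A) (x y z : A) :
    pr3 α β γ (x ⊗ₜ[k] (y ⊗ₜ[k] z)) = α x * (β y * γ z) := by simp [pr3]

lemma pr2_sep [FiniteDimensional k A] (t : A ⊗[k] A)
    (h : ∀ β γ : Module.Dual k A, pr2 β γ t = 0) : t = 0 := by
  rw [← Module.forall_dual_apply_eq_zero_iff k]
  intro φ
  obtain ⟨u, rfl⟩ : ∃ u, TensorProduct.dualDistrib k A A u = φ := by
    refine ⟨(TensorProduct.dualDistribEquiv k A A).symm φ, ?_⟩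
    exact (TensorProduct.dualDistribEquiv k A A).apply_symm_apply φ
  induction u using TensorProduct.induction_on with
  | zero => simp
  | tmul β γ =>
      have : TensorProduct.dualDistrib k A A (β ⊗ₜ γ) = pr2 β γ := by
        apply TensorProduct.ext'
        intro x y
        simp [TensorProduct.dualDistrib_apply]
      rw [this]; exact h β γ
  | add u v hu hv => simp [map_add, LinearMap.add_apply, hu, hv]

lemma pr3_sep [FiniteDimensional k A] (t : A ⊗[k] (A ⊗[k] A))
    (h : ∀ α β γ : Module.Dual k A, pr3 α β γ t = 0) : t = 0 := by
  rw [← Module.forall_dual_apply_eq_zero_iff k]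
  intro φ
  obtain ⟨u, rfl⟩ : ∃ u, TensorProduct.dualDistrib k A (A ⊗[k] A) u = φ := by
    refine ⟨(TensorProduct.dualDistribEquiv k A (A ⊗[k] A)).symm φ, ?_⟩
    exact (TensorProduct.dualDistribEquiv k A (A ⊗[k] A)).apply_symm_apply φ
  induction u using TensorProduct.induction_on with
  | zero => simp
  | tmul α ψ =>
      obtain ⟨v, rfl⟩ : ∃ v, TensorProduct.dualDistrib k A A v = ψ := by
        refine ⟨(TensorProduct.dualDistribEquiv k A A).symm ψ, ?_⟩
        exact (TensorProduct.dualDistribEquiv k A A).apply_symm_apply ψ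
      induction v using TensorProduct.induction_on with
      | zero => simp
      | tmul β γ =>
          have : TensorProduct.dualDistrib k A (A ⊗[k] A)
              (α ⊗ₜ TensorProduct.dualDistrib k A A (β ⊗ₜ γ)) = pr3 α β γ := by
            apply TensorProduct.ext'
            intro x w
            induction w using TensorProduct.induction_on with
            | zero => simp
            | tmul y z => simp [TensorProduct.dualDistrib_apply, mul_assoc]
            | add w1 w2 h1 h2 => simp only [TensorProduct.tmul_add, map_add, h1, h2]
          rw [this]; exact h α β γ
      | add v1 v2 h1 h2 =>
          simp only [map_add, TensorProduct.tmul_add, LinearMap.add_apply] at *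
          simp [h1, h2]
  | add u v hu hv => simp [map_add, LinearMap.add_apply, hu, hv]

end Aux
section Aux2
variable {A : Type v} [AddCommGroup A] [Module k A]
variable (m : A →ₗ[k] A →ₗ[k] A) (α β γ : Module.Dual k A)

lemma Tr_adj (x : A ⊗[k] A) (α β : Module.Dual k A) :
    α (Tr x β) = β (Tr (TensorProduct.comm k A A x) α) := by
  induction x using TensorProduct.induction_on with
  | zero => simp
  | tmul a b => simp [mul_comm]
  | add u v hu hv => simp [map_add, hu, hv]

lemma pr3_comp12_13 (x y : A ⊗[k] A) :
    pr3 α β γ (comp12_13 m (x ⊗ₜ y)) = α (m (Tr x β) (Tr y γ)) := by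
  induction x using TensorProduct.induction_on with
  | zero => simp [TensorProduct.zero_tmul]
  | tmul a b =>
    induction y using TensorProduct.induction_on with
    | zero => simp [TensorProduct.tmul_zero]
    | tmul c d =>
        simp only [comp12_13, tlift, LinearMap.coe_comp, LinearEquiv.coe_coe, Function.comp_apply,
          TensorProduct.tensorTensorTensorComm_tmul, TensorProduct.comm_tmul,
          TensorProduct.assoc_tmul, TensorProduct.assoc_symm_tmul, TensorProduct.map_tmul,
          TensorProduct.lift.tmul, LinearMap.mk₂_apply, LinearMap.id_coe, id_eq, Tr_tmul,
          pr3_tmul, LinearMap.flip_apply, map_smul, LinearMap.smul_apply, smul_eq_mul]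
        try ring
    | add y1 y2 h1 h2 =>
        simp only [TensorProduct.tmul_add, map_add, LinearMap.add_apply, h1, h2]
  | add x1 x2 h1 h2 =>
      simp only [TensorProduct.add_tmul, map_add, LinearMap.add_apply, h1, h2]

lemma pr3_comp13_12 (x y : A ⊗[k] A) :
    pr3 α β γ (comp13_12 m (x ⊗ₜ y)) = α (m (Tr x γ) (Tr y β)) := by
  induction x using TensorProduct.induction_on with
  | zero => simp [TensorProduct.zero_tmul]
  | tmul a b =>
    induction y using TensorProduct.induction_on with
    | zero => simp [TensorProduct.tmul_zero]
    | tmul c d =>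
        simp only [comp13_12, tlift, LinearMap.coe_comp, LinearEquiv.coe_coe, Function.comp_apply,
          TensorProduct.tensorTensorTensorComm_tmul, TensorProduct.comm_tmul,
          TensorProduct.assoc_tmul, TensorProduct.assoc_symm_tmul, TensorProduct.map_tmul,
          TensorProduct.lift.tmul, LinearMap.mk₂_apply, LinearMap.id_coe, id_eq, Tr_tmul,
          pr3_tmul, LinearMap.flip_apply, map_smul, LinearMap.smul_apply, smul_eq_mul]
        try ring
    | add y1 y2 h1 h2 =>
        simp only [TensorProduct.tmul_add, map_add, LinearMap.add_apply, h1, h2]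
  | add x1 x2 h1 h2 =>
      simp only [TensorProduct.add_tmul, map_add, LinearMap.add_apply, h1, h2]

lemma pr3_comp12_23 (x y : A ⊗[k] A) :
    pr3 α β γ (comp12_23 m (x ⊗ₜ y)) = β (m (Tr (TensorProduct.comm k A A x) α) (Tr y γ)) := by
  induction x using TensorProduct.induction_on with
  | zero => simp [TensorProduct.zero_tmul]
  | tmul a b =>
    induction y using TensorProduct.induction_on with
    | zero => simp [TensorProduct.tmul_zero]
    | tmul c d =>
        simp only [comp12_23, tlift, LinearMap.coe_comp, LinearEquiv.coe_coe, Function.comp_apply,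
          TensorProduct.tensorTensorTensorComm_tmul, TensorProduct.comm_tmul,
          TensorProduct.assoc_tmul, TensorProduct.assoc_symm_tmul, TensorProduct.map_tmul,
          TensorProduct.lift.tmul, LinearMap.mk₂_apply, LinearMap.id_coe, id_eq, Tr_tmul,
          pr3_tmul, LinearMap.flip_apply, map_smul, LinearMap.smul_apply, smul_eq_mul]
        try ring
    | add y1 y2 h1 h2 =>
        simp only [TensorProduct.tmul_add, map_add, LinearMap.add_apply, h1, h2]
  | add x1 x2 h1 h2 =>
      simp only [TensorProduct.add_tmul, map_add, LinearMap.add_apply, h1, h2]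

lemma pr3_comp23_12 (x y : A ⊗[k] A) :
    pr3 α β γ (comp23_12 m (x ⊗ₜ y)) = β (m (Tr x γ) (Tr (TensorProduct.comm k A A y) α)) := by
  induction x using TensorProduct.induction_on with
  | zero => simp [TensorProduct.zero_tmul]
  | tmul a b =>
    induction y using TensorProduct.induction_on with
    | zero => simp [TensorProduct.tmul_zero]
    | tmul c d =>
        simp only [comp23_12, tlift, LinearMap.coe_comp, LinearEquiv.coe_coe, Function.comp_apply,
          TensorProduct.tensorTensorTensorComm_tmul, TensorProduct.comm_tmul,
          TensorProduct.assoc_tmul, TensorProduct.assoc_symm_tmul, TensorProduct.map_tmul,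
          TensorProduct.lift.tmul, LinearMap.mk₂_apply, LinearMap.id_coe, id_eq, Tr_tmul,
          pr3_tmul, LinearMap.flip_apply, map_smul, LinearMap.smul_apply, smul_eq_mul]
        try ring
    | add y1 y2 h1 h2 =>
        simp only [TensorProduct.tmul_add, map_add, LinearMap.add_apply, h1, h2]
  | add x1 x2 h1 h2 =>
      simp only [TensorProduct.add_tmul, map_add, LinearMap.add_apply, h1, h2]

lemma pr3_comp13_23 (x y : A ⊗[k] A) :
    pr3 α β γ (comp13_23 m (x ⊗ₜ y)) = γ (m (Tr (TensorProduct.comm k A A x) α) (Tr (TensorProduct.comm k A A y) β)) := by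
  induction x using TensorProduct.induction_on with
  | zero => simp [TensorProduct.zero_tmul]
  | tmul a b =>
    induction y using TensorProduct.induction_on with
    | zero => simp [TensorProduct.tmul_zero]
    | tmul c d =>
        simp only [comp13_23, tlift, LinearMap.coe_comp, LinearEquiv.coe_coe, Function.comp_apply,
          TensorProduct.tensorTensorTensorComm_tmul, TensorProduct.comm_tmul,
          TensorProduct.assoc_tmul, TensorProduct.assoc_symm_tmul, TensorProduct.map_tmul,
          TensorProduct.lift.tmul, LinearMap.mk₂_apply, LinearMap.id_coe, id_eq, Tr_tmul,
          pr3_tmul, LinearMap.flip_apply, map_smul, LinearMap.smul_apply, smul_eq_mul]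
        try ring
    | add y1 y2 h1 h2 =>
        simp only [TensorProduct.tmul_add, map_add, LinearMap.add_apply, h1, h2]
  | add x1 x2 h1 h2 =>
      simp only [TensorProduct.add_tmul, map_add, LinearMap.add_apply, h1, h2]

lemma pr3_comp23_13 (x y : A ⊗[k] A) :
    pr3 α β γ (comp23_13 m (x ⊗ₜ y)) = γ (m (Tr (TensorProduct.comm k A A x) β) (Tr (TensorProduct.comm k A A y) α)) := by
  induction x using TensorProduct.induction_on with
  | zero => simp [TensorProduct.zero_tmul]
  | tmul a b =>
    induction y using TensorProduct.induction_on with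
    | zero => simp [TensorProduct.tmul_zero]
    | tmul c d =>
        simp only [comp23_13, tlift, LinearMap.coe_comp, LinearEquiv.coe_coe, Function.comp_apply,
          TensorProduct.tensorTensorTensorComm_tmul, TensorProduct.comm_tmul,
          TensorProduct.assoc_tmul, TensorProduct.assoc_symm_tmul, TensorProduct.map_tmul,
          TensorProduct.lift.tmul, LinearMap.mk₂_apply, LinearMap.id_coe, id_eq, Tr_tmul,
          pr3_tmul, LinearMap.flip_apply, map_smul, LinearMap.smul_apply, smul_eq_mul]
        try ring
    | add y1 y2 h1 h2 =>
        simp only [TensorProduct.tmul_add, map_add, LinearMap.add_apply, h1, h2]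
  | add x1 x2 h1 h2 =>
      simp only [TensorProduct.add_tmul, map_add, LinearMap.add_apply, h1, h2]

end Aux2
section Aux3
variable {A : Type v} [AddCommGroup A] [Module k A]

lemma alCond_iff [FiniteDimensional k A] (p s : A →ₗ[k] A →ₗ[k] A) (r : A ⊗[k] A)
    (hsymm : TensorProduct.comm k A A r = r) :
    AlCondPre p s r ↔ ∀ α β γ : Module.Dual k A,
      γ ((p + s) (Tr r α) (Tr r β)) =
        β (p (Tr r γ) (Tr r α)) + α (s (Tr r β) (Tr r γ)) := by
  constructor
  · intro hA α β γ
    have h1 := congrArg γ (hA α β)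
    rw [Tr_adj, hsymm] at h1
    simp only [LinearMap.add_apply, dualT_apply, LinearMap.flip_apply] at h1 ⊢
    linear_combination h1
  · intro hs α β
    rw [← sub_eq_zero, ← Module.forall_dual_apply_eq_zero_iff k]
    intro γ
    rw [map_sub, sub_eq_zero, Tr_adj, hsymm]
    have := hs α β γ
    simp only [LinearMap.add_apply, dualT_apply, LinearMap.flip_apply] at this ⊢
    linear_combination this

end Aux3
section Aux4
variable {A : Type v} [AddCommGroup A] [Module k A]

lemma pa11_iff [FiniteDimensional k A] (p s : A →ₗ[k] A →ₗ[k] A) (r : A ⊗[k] A)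
    (hsymm : TensorProduct.comm k A A r = r) :
    PA11 p s r = 0 ↔ AlCondPre p s r := by
  rw [alCond_iff p s r hsymm]
  constructor
  · intro h0 a b c
    have h1 := congrArg (pr3 c a b) h0
    simp only [PA11, map_sub, map_zero, pr3_comp12_13, pr3_comp23_12, pr3_comp13_23, hsymm] at h1
    linear_combination h1
  · intro hs
    apply pr3_sep
    intro α β γ
    simp only [PA11, map_sub, pr3_comp12_13, pr3_comp23_12, pr3_comp13_23, hsymm]
    linear_combination hs β γ α

lemma pa12_iff [FiniteDimensional k A] (p s : A →ₗ[k] A →ₗ[k] A) (r : A ⊗[k] A)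
    (hsymm : TensorProduct.comm k A A r = r) :
    PA12 p s r = 0 ↔ AlCondPre p s r := by
  rw [alCond_iff p s r hsymm]
  constructor
  · intro h0 a b c
    have h1 := congrArg (pr3 c b a) h0
    simp only [PA12, map_sub, map_zero, pr3_comp13_12, pr3_comp12_23, pr3_comp23_13, hsymm] at h1
    linear_combination h1
  · intro hs
    apply pr3_sep
    intro α β γ
    simp only [PA12, map_sub, pr3_comp13_12, pr3_comp12_23, pr3_comp23_13, hsymm]
    linear_combination hs γ β α

lemma pa21_iff [FiniteDimensional k A] (p s : A →ₗ[k] A →ₗ[k] A) (r : A ⊗[k] A)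
    (hsymm : TensorProduct.comm k A A r = r) :
    PA21 p s r = 0 ↔ AlCondPre p s r := by
  rw [alCond_iff p s r hsymm]
  constructor
  · intro h0 a b c
    have h1 := congrArg (pr3 a c b) h0
    simp only [PA21, map_sub, map_zero, pr3_comp12_23, pr3_comp23_13, pr3_comp13_12, hsymm] at h1
    linear_combination h1
  · intro hs
    apply pr3_sep
    intro α β γ
    simp only [PA21, map_sub, pr3_comp12_23, pr3_comp23_13, pr3_comp13_12, hsymm]
    linear_combination hs α γ β

lemma pa22_iff [FiniteDimensional k A] (p s : A →ₗ[k] A →ₗ[k] A) (r : A ⊗[k] A)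
    (hsymm : TensorProduct.comm k A A r = r) :
    PA22 p s r = 0 ↔ AlCondPre p s r := by
  rw [alCond_iff p s r hsymm]
  constructor
  · intro h0 a b c
    have h1 := congrArg (pr3 b c a) h0
    simp only [PA22, map_sub, map_zero, pr3_comp23_12, pr3_comp13_23, pr3_comp12_13, hsymm] at h1
    linear_combination h1
  · intro hs
    apply pr3_sep
    intro α β γ
    simp only [PA22, map_sub, pr3_comp23_12, pr3_comp13_23, pr3_comp12_13, hsymm]
    linear_combination hs γ α β

lemma pa31_iff [FiniteDimensional k A] (p s : A →ₗ[k] A →ₗ[k] A) (r : A ⊗[k] A)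
    (hsymm : TensorProduct.comm k A A r = r) :
    PA31 p s r = 0 ↔ AlCondPre p s r := by
  rw [alCond_iff p s r hsymm]
  constructor
  · intro h0 a b c
    have h1 := congrArg (pr3 a b c) h0
    simp only [PA31, map_sub, map_zero, pr3_comp13_23, pr3_comp12_13, pr3_comp23_12, hsymm] at h1
    linear_combination h1
  · intro hs
    apply pr3_sep
    intro α β γ
    simp only [PA31, map_sub, pr3_comp13_23, pr3_comp12_13, pr3_comp23_12, hsymm]
    linear_combination hs α β γ

lemma pa32_iff [FiniteDimensional k A] (p s : A →ₗ[k] A →ₗ[k] A) (r : A ⊗[k] A)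
    (hsymm : TensorProduct.comm k A A r = r) :
    PA32 p s r = 0 ↔ AlCondPre p s r := by
  rw [alCond_iff p s r hsymm]
  constructor
  · intro h0 a b c
    have h1 := congrArg (pr3 b a c) h0
    simp only [PA32, map_sub, map_zero, pr3_comp23_13, pr3_comp13_12, pr3_comp12_23, hsymm] at h1
    linear_combination h1
  · intro hs
    apply pr3_sep
    intro α β γ
    simp only [PA32, map_sub, pr3_comp23_13, pr3_comp13_12, pr3_comp12_23, hsymm]
    linear_combination hs β α γ

end Aux4
section Aux5
variable {A : Type v} [AddCommGroup A] [Module k A]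

lemma lAssoc_swap_ap (p s : A →ₗ[k] A →ₗ[k] A)
    (h4 : ∀ x y : A, lAssoc p s x x y = 0) (β : Module.Dual k A) (x y z : A) :
    β (lAssoc p s x y z) + β (lAssoc p s y x z) = 0 := by
  have e := congrArg β (h4 (x + y) z)
  have ex := congrArg β (h4 x z)
  have ey := congrArg β (h4 y z)
  simp only [lAssoc, map_add, map_sub, map_zero, LinearMap.add_apply,
    LinearMap.sub_apply] at e ex ey ⊢
  linear_combination e - ex - ey

lemma rAssoc_swap_ap (p s : A →ₗ[k] A →ₗ[k] A)
    (h3 : ∀ x y : A, rAssoc p s y x x = 0) (β : Module.Dual k A) (a x y : A) :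
    β (rAssoc p s a x y) + β (rAssoc p s a y x) = 0 := by
  have e := congrArg β (h3 (x + y) a)
  have ex := congrArg β (h3 x a)
  have ey := congrArg β (h3 y a)
  simp only [rAssoc, map_add, map_sub, map_zero, LinearMap.add_apply,
    LinearMap.sub_apply] at e ex ey ⊢
  linear_combination e - ex - ey

lemma partB (p s : A →ₗ[k] A →ₗ[k] A) (h : IsPreAlt p s) (T : Module.Dual k A →ₗ[k] A)
    (P S : Module.Dual k A →ₗ[k] Module.Dual k A →ₗ[k] Module.Dual k A)
    (hP : ∀ (α β : Module.Dual k A) (x : A), P α β x = α (s (T β) x))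
    (hS : ∀ (α β : Module.Dual k A) (x : A), S α β x = β (p x (T α)))
    (hT : ∀ α β : Module.Dual k A,
      T (P α β + S α β) = p (T α) (T β) + s (T α) (T β)) :
    IsPreAlt P S := by
  obtain ⟨h1patt, h2patt, h3patt, h4patt⟩ := h
  refine ⟨?_, ?_, ?_, ?_⟩
  · intro α β γ
    ext v
    simp only [mAssoc, rAssoc, LinearMap.add_apply, LinearMap.sub_apply,
      LinearMap.zero_apply, hP, hS, hT]
    have e1 := congrArg β (h2patt (T γ) v (T α))
    have e2 := lAssoc_swap_ap p s h4patt β (T γ) (T α) v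
    simp only [mAssoc, lAssoc, map_add, map_sub, map_zero, LinearMap.add_apply,
      LinearMap.sub_apply] at e1 e2 ⊢
    linear_combination e1 - e2
  · intro α β γ
    ext v
    simp only [mAssoc, lAssoc, LinearMap.add_apply, LinearMap.sub_apply,
      LinearMap.zero_apply, hP, hS, hT]
    have e1 := congrArg β (h1patt (T γ) v (T α))
    have e2 := rAssoc_swap_ap p s h3patt β v (T γ) (T α)
    simp only [mAssoc, rAssoc, map_add, map_sub, map_zero, LinearMap.add_apply,
      LinearMap.sub_apply] at e1 e2 ⊢
    linear_combination e1 - e2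
  · intro α β
    ext v
    simp only [rAssoc, LinearMap.add_apply, LinearMap.sub_apply,
      LinearMap.zero_apply, hP, hS, hT]
    have e1 := congrArg β (h4patt (T α) v)
    simp only [lAssoc, map_add, map_sub, map_zero, LinearMap.add_apply,
      LinearMap.sub_apply] at e1 ⊢
    linear_combination -e1
  · intro α β
    ext v
    simp only [lAssoc, LinearMap.add_apply, LinearMap.sub_apply,
      LinearMap.zero_apply, hP, hS, hT]
    have e1 := congrArg β (h3patt (T α) v)
    simp only [rAssoc, map_add, map_sub, map_zero, LinearMap.add_apply,
      LinearMap.sub_apply] at e1 ⊢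
    linear_combination -e1

end Aux5
theorem stmt15 {A : Type v} [AddCommGroup A] [Module k A] [FiniteDimensional k A]
    (hchar : (2 : k) ≠ 0) (p s : A →ₗ[k] A →ₗ[k] A) (h : IsPreAlt p s)
    (r : A ⊗[k] A) (hsymm : TensorProduct.comm k A A r = r) :
    (PA11 p s r = 0 ↔ AlCondPre p s r) ∧
    (PA12 p s r = 0 ↔ AlCondPre p s r) ∧
    (PA21 p s r = 0 ↔ AlCondPre p s r) ∧
    (PA22 p s r = 0 ↔ AlCondPre p s r) ∧
    (PA31 p s r = 0 ↔ AlCondPre p s r) ∧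
    (PA32 p s r = 0 ↔ AlCondPre p s r) ∧
    (AlCondPre p s r →
      IsPreAlt (((dualT s ∘ₗ Tr r :
            Module.Dual k A →ₗ[k] Module.End k (Module.Dual k A)) :
          Module.Dual k A →ₗ[k] Module.Dual k A →ₗ[k] Module.Dual k A).flip)
        ((dualT p.flip ∘ₗ Tr r :
            Module.Dual k A →ₗ[k] Module.End k (Module.Dual k A)) :
          Module.Dual k A →ₗ[k] Module.Dual k A →ₗ[k] Module.Dual k A)) := by
  refine ⟨pa11_iff p s r hsymm, pa12_iff p s r hsymm, pa21_iff p s r hsymm,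
    pa22_iff p s r hsymm, pa31_iff p s r hsymm, pa32_iff p s r hsymm, ?_⟩
  intro hA
  refine partB p s h (Tr r) _ _ ?_ ?_ ?_
  · intro α β x
    simp [LinearMap.flip_apply, dualT_apply]
  · intro α β x
    simp [LinearMap.flip_apply, dualT_apply]
  · intro α β
    have h0 := (hA α β).symm
    simp only [LinearMap.add_apply] at h0
    simpa [LinearMap.flip_apply, LinearMap.comp_apply, add_comm] using h0
end

section
/- Let (A,≺,≻) be a pre-alternative algebra over a field of characteristic ≠ 2 and let B be a 2-cocycle of (A,≺,≻), i.e., B(x∘y, z) = B(x, y≻z) + B(y, z≺x) for all x,y,z ∈ A, where x∘y = x≺y + x≻y. Then the skew-symmetric bilinear form ω(x,y) = B(x,y) − B(y,x) is closed on the associated alternative algebra As(A): ω(x∘y, z) + ω(y∘z, x) + ω(z∘x, y) = 0 for all x,y,z ∈ A. -/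
open TensorProduct

universe u v w

variable {k : Type u} [Field k]

theorem stmt16 {A : Type v} [AddCommGroup A] [Module k A] (hchar : (2 : k) ≠ 0)
    (p s : A →ₗ[k] A →ₗ[k] A) (h : IsPreAlt p s) (B : A →ₗ[k] A →ₗ[k] k)
    (hcocycle : ∀ x y z : A, B (p x y + s x y) z = B x (s y z) + B y (p z x)) :
    ∀ x y z : A,
      ((B (p x y + s x y) z - B z (p x y + s x y)) +
        (B (p y z + s y z) x - B x (p y z + s y z))) +
        (B (p z x + s z x) y - B y (p z x + s z x)) = 0 := by
  intro x y z
  rw [hcocycle x y z, hcocycle y z x, hcocycle z x y]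
  simp only [map_add]
  ring
end
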